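/- The function x ↦ f_k(x)/T_k is a dual feasible function, i.e., for any finite sequence x_1,...,x_m in (0,1] with Σ x_i ≤ 1, we have Σ f_k(x_i)/T_k ≤ 1. -/

import Mathlib

/-- The sequence from the Harmonic algorithm: `t 1 = 1`, `t (i+1) = t i * (t i + 1)`. -/
def tSeq : ℕ → ℕ
  | 0 => 1
  | 1 => 1
  | (n + 2) => tSeq (n + 1) * (tSeq (n + 1) + 1)

/-- The harmonic weighting function `f_k`. -/
noncomputable def fHarm (k : ℕ) (x : ℝ) : ℝ :=
  if x ≤ 1 / k then k * x / ((k : ℝ) - 1) else 1 / (⌊1 / x⌋ : ℝ)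

/-- The harmonic constant `T_k`, where `m` satisfies `t_m < k ≤ t_{m+1}`. -/
noncomputable def TkVal (k m : ℕ) : ℝ :=
  (∑ i ∈ Finset.Icc 1 m, (1 : ℝ) / (tSeq i : ℝ)) +
    (1 / (tSeq (m + 1) : ℝ)) * ((k : ℝ) / ((k : ℝ) - 1))

/-!
Write `c = fHarmSlope k = k/(k-1)` and `φ = fHarmExcess k`, so `φ(t) = 1/t - c/(t+1) ≥ 0` for
`1 ≤ t < k`. On `(1/(t+1), 1/t]` we have `f_k(x) = 1/t = φ(t) + c/(t+1) < φ(t) + c x`, and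
`f_k(x) = c x` on `[0, 1/k]`; hence `Σ f_k(xᵢ) ≤ c + Σ φ(tᵢ)` over the large items, whose `tᵢ < k`
satisfy `Σ 1/(tᵢ+1) < Σ xᵢ ≤ 1`. Telescoping gives `T_k = c + Σ_{i ≤ m} φ(t_i)` along Sylvester's
sequence, and the greedy choice is optimal: if the smallest `tᵢ` equals the current Sylvester number
`s`, drop it and continue with the budget `1/s - 1/(s+1) = 1/(s(s+1))`; otherwise all `tᵢ > s`, and
since `φ(t)(t+1) = 1 + 1/t - c` decreases in `t`, the budget `1/s` bounds `Σ φ(tᵢ)` by `φ(s)`.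
-/

open Finset

noncomputable def fHarmSlope (k : ℕ) : ℝ := (k : ℝ) / ((k : ℝ) - 1)

noncomputable def fHarmExcess (k t : ℕ) : ℝ := 1 / (t : ℝ) - fHarmSlope k / ((t : ℝ) + 1)

theorem tSeq_pos : ∀ n, 0 < tSeq n
  | 0 | 1 => Nat.one_pos
  | n + 2 => Nat.mul_pos (tSeq_pos (n + 1)) (Nat.succ_pos _)

theorem tSeq_succ {n : ℕ} (hn : 1 ≤ n) : tSeq (n + 1) = tSeq n * (tSeq n + 1) := by
  obtain ⟨j, rfl⟩ := Nat.exists_eq_add_of_le' hn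
  rfl

theorem tSeq_mono : Monotone tSeq := by
  refine monotone_nat_of_le_succ fun n => ?_
  rcases n with _ | n
  · exact le_rfl
  · rw [tSeq_succ n.succ_pos]
    exact Nat.le_mul_of_pos_right _ (Nat.succ_pos _)

section

variable {k : ℕ}

theorem fHarmSlope_eq_one_add (hk : 2 ≤ k) : fHarmSlope k = 1 + 1 / ((k : ℝ) - 1) := by
  have : (k : ℝ) - 1 ≠ 0 := by
    have : (2 : ℝ) ≤ k := by exact_mod_cast hk
    linarith
  rw [fHarmSlope]
  field_simp
  ring

theorem one_le_fHarmSlope (hk : 2 ≤ k) : 1 ≤ fHarmSlope k := by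
  have : (2 : ℝ) ≤ k := by exact_mod_cast hk
  rw [fHarmSlope_eq_one_add hk, le_add_iff_nonneg_right]
  exact one_div_nonneg.2 (by linarith)

theorem fHarmExcess_eq_div {t : ℕ} (ht : 0 < t) :
    fHarmExcess k t = (1 + 1 / (t : ℝ) - fHarmSlope k) / ((t : ℝ) + 1) := by
  have : (0 : ℝ) < t := by exact_mod_cast ht
  rw [fHarmExcess]
  field_simp

theorem fHarmExcess_nonneg {t : ℕ} (ht : 1 ≤ t) (htk : t < k) : 0 ≤ fHarmExcess k t := by
  have ht' : (1 : ℝ) ≤ t := by exact_mod_cast ht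
  have htk' : (t : ℝ) ≤ k - 1 := by
    have : (t : ℝ) + 1 ≤ k := by exact_mod_cast htk
    linarith
  rw [fHarmExcess_eq_div ht, fHarmSlope_eq_one_add (by omega)]
  have : 1 / ((k : ℝ) - 1) ≤ 1 / t := one_div_le_one_div_of_le (by linarith) htk'
  exact div_nonneg (by linarith) (by linarith)

theorem fHarmExcess_tSeq_nonneg {m i : ℕ} (hm : tSeq m < k) (him : i ≤ m) :
    0 ≤ fHarmExcess k (tSeq i) :=
  fHarmExcess_nonneg (tSeq_pos i) ((tSeq_mono him).trans_lt hm)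

theorem TkVal_eq_sum_add (m : ℕ) :
    TkVal k m = ∑ i ∈ Icc 1 m, fHarmExcess k (tSeq i) + fHarmSlope k := by
  induction m with
  | zero => simp [TkVal, tSeq, fHarmSlope]
  | succ m ih =>
    have hpos : (0 : ℝ) < tSeq (m + 1) := by exact_mod_cast tSeq_pos _
    have hrec : (tSeq (m + 2) : ℝ) = tSeq (m + 1) * (tSeq (m + 1) + 1) := by
      rw [tSeq_succ (by omega)]; push_cast; ring
    have hstep : TkVal k (m + 1) = TkVal k m + fHarmExcess k (tSeq (m + 1)) := by
      rw [TkVal, TkVal, sum_Icc_succ_top (by omega), hrec, fHarmExcess, fHarmSlope]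
      field_simp
      ring
    rw [hstep, ih, sum_Icc_succ_top (by omega)]
    ring

theorem one_le_TkVal {m : ℕ} (hm : tSeq m < k) : 1 ≤ TkVal k m := by
  rw [TkVal_eq_sum_add]
  have := one_le_fHarmSlope (k := k) (by have := tSeq_pos m; omega)
  have : 0 ≤ ∑ i ∈ Icc 1 m, fHarmExcess k (tSeq i) :=
    sum_nonneg fun i hi => fHarmExcess_tSeq_nonneg hm (mem_Icc.1 hi).2
  linarith

theorem fHarm_of_le {x : ℝ} (hx : x ≤ 1 / k) : fHarm k x = fHarmSlope k * x := by
  rw [fHarm, if_pos hx, fHarmSlope]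
  ring

theorem fHarm_of_lt {x : ℝ} (hx : 1 / k < x) : fHarm k x = 1 / ⌊1 / x⌋₊ := by
  have : 0 < x := hx.trans_le' (by positivity)
  rw [fHarm, if_neg hx.not_ge, natCast_floor_eq_intCast_floor (by positivity)]

theorem floor_one_div_lt (hk : 0 < k) {x : ℝ} (hx : 1 / k < x) : ⌊1 / x⌋₊ < k := by
  have hx0 : 0 < x := hx.trans_le' (by positivity)
  rw [Nat.floor_lt (by positivity)]
  exact (one_div_lt hx0 (by exact_mod_cast hk)).2 hx

theorem one_div_floor_one_div_add_one_lt {x : ℝ} (hx : 0 < x) : 1 / ((⌊1 / x⌋₊ : ℝ) + 1) < x := by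
  have := Nat.lt_floor_add_one (1 / x)
  rw [div_lt_iff₀ hx] at this
  rw [div_lt_iff₀ (by positivity)]
  linarith

theorem fHarm_le_slope_mul_add (hk : 2 ≤ k) {x : ℝ} :
    fHarm k x ≤ fHarmSlope k * x + if 1 / k < x then fHarmExcess k ⌊1 / x⌋₊ else 0 := by
  split_ifs with h
  · have hx0 : 0 < x := h.trans_le' (by positivity)
    rw [fHarm_of_lt h, fHarmExcess]
    have : fHarmSlope k / ((⌊1 / x⌋₊ : ℝ) + 1) ≤ fHarmSlope k * x := by
      rw [div_eq_mul_one_div]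
      have := one_le_fHarmSlope hk
      gcongr
      exact (one_div_floor_one_div_add_one_lt hx0).le
    linarith
  · rw [fHarm_of_le (not_lt.1 h), add_zero]

theorem fHarm_mem_Icc (hk : 2 ≤ k) {x : ℝ} (hx : x ∈ Set.Icc 0 1) : fHarm k x ∈ Set.Icc 0 1 := by
  obtain ⟨hx0, hx1⟩ := hx
  have hk' : (2 : ℝ) ≤ k := by exact_mod_cast hk
  by_cases h : x ≤ 1 / k
  · rw [fHarm_of_le h, fHarmSlope, div_mul_eq_mul_div]
    have : (k : ℝ) * x ≤ 1 := (le_div_iff₀' (by positivity)).1 h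
    exact ⟨div_nonneg (by positivity) (by linarith), (div_le_one (by linarith)).2 (by linarith)⟩
  · rw [not_le] at h
    have hx0' : 0 < x := h.trans_le' (by positivity)
    have : (1 : ℝ) ≤ ⌊1 / x⌋₊ := by
      exact_mod_cast (Nat.one_le_floor_iff _).2 ((one_le_div hx0').2 hx1)
    rw [fHarm_of_lt h]
    exact ⟨by positivity, (div_le_one (by linarith)).2 this⟩

theorem sum_fHarmExcess_le_of_lt {α : Type*} {B : Finset α} {t : α → ℕ} {y : α → ℝ} {s : ℕ}
    (hs : 1 ≤ s) (hsk : s < k) (hst : ∀ i ∈ B, s < t i)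
    (hty : ∀ i ∈ B, 1 / ((t i : ℝ) + 1) < y i) (hy : ∑ i ∈ B, y i ≤ 1 / s) :
    ∑ i ∈ B, fHarmExcess k (t i) ≤ fHarmExcess k s := by
  set c := fHarmSlope k
  have hc : 1 ≤ c := one_le_fHarmSlope (by omega)
  have hs0 : (0 : ℝ) < s := by exact_mod_cast hs
  set r := max (1 + 1 / ((s : ℝ) + 1) - c) 0
  have hitem : ∀ i ∈ B, fHarmExcess k (t i) ≤ r * y i := by
    intro i hi
    have hti : (s : ℝ) + 1 ≤ t i := by exact_mod_cast hst i hi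
    have : 1 / (t i : ℝ) ≤ 1 / ((s : ℝ) + 1) := one_div_le_one_div_of_le (by positivity) hti
    calc fHarmExcess k (t i) = (1 + 1 / (t i : ℝ) - c) * (1 / ((t i : ℝ) + 1)) := by
          rw [fHarmExcess_eq_div (by have := hst i hi; omega), div_eq_mul_one_div]
      _ ≤ r * y i :=
          mul_le_mul (le_max_of_le_left (by linarith)) (hty i hi).le (by positivity)
            (le_max_right _ _)
  calc ∑ i ∈ B, fHarmExcess k (t i) ≤ ∑ i ∈ B, r * y i := sum_le_sum hitem
    _ = r * ∑ i ∈ B, y i := (mul_sum _ _ _).symm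
    _ ≤ r * (1 / s) := by gcongr
    _ ≤ fHarmExcess k s := by
        rcases le_total (1 + 1 / ((s : ℝ) + 1) - c) 0 with hr | hr
        · rw [show r = 0 from max_eq_right hr, zero_mul]
          exact fHarmExcess_nonneg hs hsk
        · rw [show r = _ from max_eq_left hr, fHarmExcess, ← sub_nonneg]
          have : 1 / (s : ℝ) - c / (s + 1) - (1 + 1 / (s + 1) - c) * (1 / s)
              = (c - 1) / (s * (s + 1)) := by
            field_simp
            ring
          rw [this]
          exact div_nonneg (by linarith) (by positivity)

theorem sum_fHarmExcess_le_sum_tSeq {α : Type*} [DecidableEq α] {m : ℕ} (hm : tSeq m < k)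
    (hm' : k ≤ tSeq (m + 1)) {t : α → ℕ} {y : α → ℝ} (B : Finset α)
    (htk : ∀ i ∈ B, t i < k) (hty : ∀ i ∈ B, 1 / ((t i : ℝ) + 1) < y i)
    {j : ℕ} (hj : 1 ≤ j) (hy : ∑ i ∈ B, y i ≤ 1 / tSeq j) :
    ∑ i ∈ B, fHarmExcess k (t i) ≤ ∑ i ∈ Icc j m, fHarmExcess k (tSeq i) := by
  induction B using Finset.strongInduction generalizing j with
  | H B ih =>
  rcases B.eq_empty_or_nonempty with rfl | hne
  · rw [sum_empty]
    exact sum_nonneg fun i hi => fHarmExcess_tSeq_nonneg hm (mem_Icc.1 hi).2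
  obtain ⟨i₀, hi₀, hmin⟩ := B.exists_min_image t hne
  have hy0 : ∀ i ∈ B, 0 ≤ y i := fun i hi => (hty i hi).trans' (by positivity) |>.le
  have hs_le : tSeq j ≤ t i₀ := by
    by_contra! h
    have : (1 : ℝ) / tSeq j ≤ 1 / ((t i₀ : ℝ) + 1) :=
      one_div_le_one_div_of_le (by positivity) (by exact_mod_cast h)
    linarith [hty i₀ hi₀, single_le_sum hy0 hi₀]
  have hjm : j ≤ m := by
    by_contra! h
    have : tSeq (m + 1) ≤ tSeq j := tSeq_mono h
    have := htk i₀ hi₀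
    omega
  rw [Icc_eq_cons_Ioc hjm, sum_cons, ← Icc_add_one_left_eq_Ioc]
  rcases hs_le.eq_or_lt with heq | hlt
  · -- the smallest item is `t_j`: drop it, leaving the budget `1/t_j - 1/(t_j + 1) = 1/t_{j+1}`
    rw [← add_sum_erase B _ hi₀, ← heq]
    gcongr
    refine ih _ (erase_ssubset hi₀) (fun i hi => htk i (mem_of_mem_erase hi))
      (fun i hi => hty i (mem_of_mem_erase hi)) (by omega) ?_
    have hsplit := add_sum_erase B y hi₀
    have hpos : (0 : ℝ) < tSeq j := by exact_mod_cast tSeq_pos j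
    have h1 := hty i₀ hi₀
    rw [← heq] at h1
    have : (1 : ℝ) / tSeq (j + 1) = 1 / tSeq j - 1 / ((tSeq j : ℝ) + 1) := by
      rw [tSeq_succ hj]
      push_cast
      field_simp
      ring
    rw [this]
    linarith
  · have := sum_fHarmExcess_le_of_lt (tSeq_pos j) (hs_le.trans_lt (htk i₀ hi₀))
      (fun i hi => hlt.trans_le (hmin i hi)) hty hy
    have := sum_nonneg fun i (hi : i ∈ Icc (j + 1) m) =>
      fHarmExcess_tSeq_nonneg (k := k) hm (mem_Icc.1 hi).2
    linarith

end

theorem fHarm_div_Tk_dualFeasible_general (k m : ℕ)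
    (hm1 : tSeq m < k) (hm2 : k ≤ tSeq (m + 1)) :
    (∀ x ∈ Set.Icc (0 : ℝ) 1, fHarm k x / TkVal k m ∈ Set.Icc (0 : ℝ) 1) ∧
    (∀ (n : ℕ) (x : Fin n → ℝ), (∀ i, 0 < x i ∧ x i ≤ 1) → (∑ i, x i) ≤ 1 →
      (∑ i, fHarm k (x i) / TkVal k m) ≤ 1) := by
  have hk : 2 ≤ k := by have := tSeq_pos m; omega
  have hT := one_le_TkVal hm1
  refine ⟨fun x hx => ?_, fun n x hx hsum => ?_⟩
  · obtain ⟨h0, h1⟩ := fHarm_mem_Icc hk hx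
    exact ⟨div_nonneg h0 (by linarith), (div_le_one (by linarith)).2 (h1.trans hT)⟩
  rw [← sum_div, div_le_one (by linarith), TkVal_eq_sum_add]
  calc ∑ i, fHarm k (x i)
      ≤ ∑ i, (fHarmSlope k * x i + if 1 / k < x i then fHarmExcess k ⌊1 / x i⌋₊ else 0) :=
        sum_le_sum fun i _ => fHarm_le_slope_mul_add hk
    _ = fHarmSlope k * ∑ i, x i + ∑ i with 1 / k < x i, fHarmExcess k ⌊1 / x i⌋₊ := by
        rw [sum_add_distrib, mul_sum, sum_ite, sum_const_zero, add_zero]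
    _ ≤ fHarmSlope k * 1 + ∑ i ∈ Icc 1 m, fHarmExcess k (tSeq i) := by
        gcongr
        · linarith [one_le_fHarmSlope hk]
        · refine sum_fHarmExcess_le_sum_tSeq hm1 hm2 _
            (fun i hi => floor_one_div_lt (by omega) (mem_filter.1 hi).2)
            (fun i _ => one_div_floor_one_div_add_one_lt (hx i).1) le_rfl ?_
          rw [show (tSeq 1 : ℝ) = 1 from Nat.cast_one, div_one]
          exact (sum_le_sum_of_subset_of_nonneg (filter_subset _ _)
            fun i _ _ => (hx i).1.le).trans hsum
    _ = _ := by ring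

/-- `x ↦ f_k(x)/T_k` is a dual feasible function: it maps `[0,1]` to `[0,1]` and for any
finite sequence `x_1, …, x_m` in `(0,1]` with `Σ x_i ≤ 1` we have `Σ f_k(x_i)/T_k ≤ 1`. -/
theorem fHarm_div_Tk_dualFeasible (k m : ℕ) (hk : 2 ≤ k)
    (hm1 : tSeq m < k) (hm2 : k ≤ tSeq (m + 1)) :
    (∀ x ∈ Set.Icc (0 : ℝ) 1, fHarm k x / TkVal k m ∈ Set.Icc (0 : ℝ) 1) ∧
    (∀ (n : ℕ) (x : Fin n → ℝ), (∀ i, 0 < x i ∧ x i ≤ 1) → (∑ i, x i) ≤ 1 →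
      (∑ i, fHarm k (x i) / TkVal k m) ≤ 1) :=
  fHarm_div_Tk_dualFeasible_general k m hm1 hm2
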